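/- Let T be a tree with positive edge weights and no degree-2 vertices, and let u, v be leaves forming a cherry with mid-point w. Then z(u,v) = ℓ(w), where z(u,v) := d(u,v) + Σ_{x ∈ L(T)} d(x,p) for the u-v-path p and ℓ(w) := Σ_{x ∈ L(T)} d(x,w). -/

import Mathlib

open SimpleGraph Finset

noncomputable section

variable {V : Type*}

/-- The weight of a walk: sum of the weights of its edges. -/
def walkWeight {G : SimpleGraph V} (w : Sym2 V → ℝ) {x y : V} (p : G.Walk x y) : ℝ :=
  (p.edges.map w).sum

/-- The unique path between two vertices of a tree. -/
noncomputable def tpath {G : SimpleGraph V} (hT : G.IsTree) (x y : V) : G.Walk x y :=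
  (hT.existsUnique_path x y).choose

/-- The weighted distance between two vertices of a tree: the weight of the unique path. -/
noncomputable def tdist {G : SimpleGraph V} (hT : G.IsTree) (w : Sym2 V → ℝ) (x y : V) : ℝ :=
  walkWeight w (tpath hT x y)

/-- The distance from a vertex `x` to a path `p`: the minimum distance from `x`
to a vertex on `p`. -/
noncomputable def distToPath {G : SimpleGraph V} (hT : G.IsTree) (w : Sym2 V → ℝ)
    (x : V) {a b : V} (p : G.Walk a b) : ℝ :=
  sInf {r | ∃ y ∈ p.support, r = tdist hT w x y}

/-- The set of leaves of a graph. -/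
def leaves (G : SimpleGraph V) [Fintype V] [DecidableRel G.Adj] : Finset V :=
  Finset.univ.filter (fun v => G.degree v = 1)

/-- The leaf-status of a vertex: the sum of its distances to all leaves. -/
noncomputable def leafStatus {G : SimpleGraph V} [Fintype V] [DecidableRel G.Adj]
    (hT : G.IsTree) (w : Sym2 V → ℝ) (u : V) : ℝ :=
  ∑ x ∈ leaves G, tdist hT w u x

/-- The leaf-status of a path: the sum of the distances of all leaves to the path. -/
noncomputable def pathLeafStatus {G : SimpleGraph V} [Fintype V] [DecidableRel G.Adj]
    (hT : G.IsTree) (w : Sym2 V → ℝ) {a b : V} (p : G.Walk a b) : ℝ :=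
  ∑ x ∈ leaves G, distToPath hT w x p

/-- `Lside hT w u v` is the set `L^{uv}_u` of leaves strictly closer to `u` than to `v`. -/
noncomputable def Lside {G : SimpleGraph V} [Fintype V] [DecidableRel G.Adj]
    (hT : G.IsTree) (w : Sym2 V → ℝ) (u v : V) : Finset V :=
  (leaves G).filter (fun x => tdist hT w x u < tdist hT w x v)

/-!
Every walk leaving a leaf passes through the leaf's unique neighbour. For a cherry `u, v` with
mid-point `m` the `u`–`v` path is therefore `u, m, v`, each leaf other than `u, v` is closest to it
at `m`, and `u, v` lie on it. So `ℓ(m)` and the path's leaf-status differ only in the terms of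
`u` and `v`, which add up to `w(um) + w(vm) = d(u, v)`.
-/

section Tree

variable {G : SimpleGraph V} (hT : G.IsTree) (w : Sym2 V → ℝ)

lemma tpath_isPath (x y : V) : (tpath hT x y).IsPath :=
  (hT.existsUnique_path x y).choose_spec.1

lemma eq_tpath_of_isPath {x y : V} {p : G.Walk x y} (hp : p.IsPath) : p = tpath hT x y :=
  (hT.existsUnique_path x y).choose_spec.2 p hp

lemma tdist_eq_walkWeight {x y : V} {p : G.Walk x y} (hp : p.IsPath) :
    tdist hT w x y = walkWeight w p := by
  rw [tdist, ← eq_tpath_of_isPath hT hp]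

@[simp]
lemma tdist_self (x : V) : tdist hT w x x = 0 := by
  simp [tdist_eq_walkWeight hT w (Walk.IsPath.nil (u := x)), walkWeight]

lemma tdist_comm (x y : V) : tdist hT w x y = tdist hT w y x := by
  rw [tdist_eq_walkWeight hT w (tpath_isPath hT y x).reverse]
  simp [walkWeight, Walk.edges_reverse, tdist, List.sum_reverse]

variable {w}

lemma tdist_nonneg (hw : ∀ e ∈ G.edgeSet, 0 ≤ w e) (x y : V) : 0 ≤ tdist hT w x y :=
  List.sum_nonneg <| by
    simp only [List.mem_map]
    rintro _ ⟨e, he, rfl⟩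
    exact hw e ((tpath hT x y).edges_subset_edgeSet he)

variable (w)

lemma tdist_eq_add_of_degree_eq_one {u m x : V} [Fintype (G.neighborSet u)]
    (hu : G.degree u = 1) (hum : G.Adj u m) (hx : u ≠ x) :
    tdist hT w u x = w s(u, m) + tdist hT w m x := by
  cases h : tpath hT u x with
  | nil => exact absurd rfl hx
  | @cons _ t _ hut q =>
    obtain rfl : t = m := (degree_eq_one_iff_existsUnique_adj.mp hu).unique hut hum
    have hq : q.IsPath := ((Walk.cons_isPath_iff _ _).mp (h ▸ tpath_isPath hT u x)).1
    rw [tdist, h, walkWeight, Walk.edges_cons, List.map_cons, List.sum_cons,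
      tdist_eq_walkWeight hT w hq]
    rfl

lemma tdist_eq_of_adj_of_degree_eq_one {u m : V} [Fintype (G.neighborSet u)]
    (hu : G.degree u = 1) (hum : G.Adj u m) : tdist hT w m u = w s(u, m) := by
  rw [tdist_comm, tdist_eq_add_of_degree_eq_one hT w hu hum hum.ne, tdist_self, add_zero]

lemma distToPath_eq_of_mem {x y : V} {a b : V} {p : G.Walk a b} (hy : y ∈ p.support)
    (hmin : ∀ z ∈ p.support, tdist hT w x y ≤ tdist hT w x z) :
    distToPath hT w x p = tdist hT w x y :=
  IsLeast.csInf_eq ⟨⟨y, hy, rfl⟩, by rintro _ ⟨z, hz, rfl⟩; exact hmin z hz⟩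

variable {w}

lemma distToPath_eq_zero_of_mem (hw : ∀ e ∈ G.edgeSet, 0 ≤ w e) {x a b : V} {p : G.Walk a b}
    (hx : x ∈ p.support) : distToPath hT w x p = 0 := by
  rw [distToPath_eq_of_mem hT w hx fun z _ => by simpa using tdist_nonneg hT hw x z, tdist_self]

lemma distToPath_cherry_eq_tdist (hw : ∀ e ∈ G.edgeSet, 0 ≤ w e) {u v m x : V}
    [Fintype (G.neighborSet u)] [Fintype (G.neighborSet v)]
    (hu : G.degree u = 1) (hv : G.degree v = 1) (hum : G.Adj u m) (hvm : G.Adj v m)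
    (hxu : x ≠ u) (hxv : x ≠ v) :
    distToPath hT w x (Walk.cons hum (Walk.cons hvm.symm Walk.nil)) = tdist hT w m x := by
  refine (distToPath_eq_of_mem hT w (by simp) ?_).trans (tdist_comm hT w x m)
  simp only [Walk.support_cons, Walk.support_nil, List.mem_cons, List.not_mem_nil, or_false]
  rintro z (rfl | rfl | rfl)
  · rw [tdist_comm hT w x z, tdist_eq_add_of_degree_eq_one hT w hu hum hxu.symm, tdist_comm]
    linarith [hw s(z, m) hum]
  · rfl
  · rw [tdist_comm hT w x z, tdist_eq_add_of_degree_eq_one hT w hv hvm hxv.symm, tdist_comm]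
    linarith [hw s(z, m) hvm]

end Tree

theorem stmt12_general {V : Type*} [Fintype V] {G : SimpleGraph V} [DecidableRel G.Adj]
    (hT : G.IsTree) (w : Sym2 V → ℝ) (hw : ∀ e ∈ G.edgeSet, 0 < w e)
    (u v m : V) (hu : u ∈ leaves G) (hv : v ∈ leaves G) (huv : u ≠ v)
    (hum : G.Adj u m) (hvm : G.Adj v m)
    (p : G.Walk u v) (hp : p.IsPath) :
    tdist hT w u v + pathLeafStatus hT w p = leafStatus hT w m := by
  have hw' : ∀ e ∈ G.edgeSet, 0 ≤ w e := fun e he => (hw e he).le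
  have hdu : G.degree u = 1 := (Finset.mem_filter.mp hu).2
  have hdv : G.degree v = 1 := (Finset.mem_filter.mp hv).2
  have hcherry : (Walk.cons hum (Walk.cons hvm.symm Walk.nil) : G.Walk u v).IsPath := by
    simp [Walk.cons_isPath_iff, hum.ne, huv, hvm.ne.symm]
  have hp_cherry := (eq_tpath_of_isPath hT hp).trans (eq_tpath_of_isPath hT hcherry).symm
  have hdiff : leafStatus hT w m - pathLeafStatus hT w p = w s(u, m) + w s(v, m) := by
    subst hp_cherry
    rw [leafStatus, pathLeafStatus, ← Finset.sum_sub_distrib,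
      Finset.sum_eq_add_of_mem u v hu hv huv]
    · rw [distToPath_eq_zero_of_mem hT hw' (by simp), distToPath_eq_zero_of_mem hT hw' (by simp),
        tdist_eq_of_adj_of_degree_eq_one hT w hdu hum,
        tdist_eq_of_adj_of_degree_eq_one hT w hdv hvm, sub_zero, sub_zero]
    · rintro x - ⟨hxu, hxv⟩
      rw [distToPath_cherry_eq_tdist hT hw' hdu hdv hum hvm hxu hxv, sub_self]
  have huv_dist : tdist hT w u v = w s(u, m) + w s(v, m) := by
    rw [tdist_eq_add_of_degree_eq_one hT w hdu hum huv,
      tdist_eq_of_adj_of_degree_eq_one hT w hdv hvm]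
  linarith

/-- if leaves `u, v` form a cherry with mid-point `m`, then
`z(u,v) = ℓ(m)`. -/
theorem stmt12 {V : Type*} [Fintype V] {G : SimpleGraph V} [DecidableRel G.Adj]
    (hT : G.IsTree) (w : Sym2 V → ℝ) (hw : ∀ e ∈ G.edgeSet, 0 < w e)
    (hdeg : ∀ x : V, G.degree x ≠ 2)
    (u v m : V) (hu : u ∈ leaves G) (hv : v ∈ leaves G) (huv : u ≠ v)
    (hum : G.Adj u m) (hvm : G.Adj v m)
    (p : G.Walk u v) (hp : p.IsPath) :
    tdist hT w u v + pathLeafStatus hT w p = leafStatus hT w m :=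
  stmt12_general hT w hw u v m hu hv huv hum hvm p hp
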